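/- arXiv:2211.10106 — 2 statements merged into one kernel-verified Lean document; each statement's English description precedes it below -/
import Mathlib

section
/- Let L = ℕ ∪ {ω, a} ordered by: the usual order on ℕ, and x ≤ ω for all x ∈ L (with a incomparable to all naturals). Then L has weak one-step closure but not one-step closure; in particular ℕ' = ℕ ∪ {ω} while ℕ'' = L. -/
open Set

section OrderDefs

variable {L : Type*} [Preorder L]

/-- Downward closure `↓A`. -/
def dw (A : Set L) : Set L := {x | ∃ a ∈ A, x ≤ a}

/-- Upward closure `↑A`. -/
def up (A : Set L) : Set L := {x | ∃ a ∈ A, a ≤ x}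

/-- Scott closure of a set. -/
def scottCl (A : Set L) : Set L := @closure L (Topology.scott L Set.univ) A

/-- `A' = {x : ∃ directed D ⊆ ↓A with x = sup D}`. -/
def oneStep (A : Set L) : Set L :=
  {x | ∃ D : Set L, D ⊆ dw A ∧ D.Nonempty ∧ DirectedOn (· ≤ ·) D ∧ IsLUB D x}

/-- `A'' = {x : ∃ directed D ⊆ ↓A with x ≤ sup D}`. -/
def weakOneStep (A : Set L) : Set L :=
  {x | ∃ D : Set L, D ⊆ dw A ∧ D.Nonempty ∧ DirectedOn (· ≤ ·) D ∧ ∃ y, IsLUB D y ∧ x ≤ y}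

/-- A poset has one-step closure if `cl(A) = A'` for all `A`. -/
def HasOneStepClosure (L : Type*) [Preorder L] : Prop :=
  ∀ A : Set L, scottCl A = oneStep A

/-- A poset has weak one-step closure if `cl(A) = A''` for all `A`. -/
def HasWeakOneStepClosure (L : Type*) [Preorder L] : Prop :=
  ∀ A : Set L, scottCl A = weakOneStep A

/-- Meet continuity: `x ≤ sup D` implies `x ∈ cl(↓D ∩ ↓x)`. -/
def MeetContinuous (L : Type*) [Preorder L] : Prop :=
  ∀ x : L, ∀ D : Set L, D.Nonempty → DirectedOn (· ≤ ·) D → ∀ s, IsLUB D s → x ≤ s →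
    x ∈ scottCl (dw D ∩ dw ({x} : Set L))

/-- The way-below relation `x ≪ y`. -/
def wayBelow (x y : L) : Prop :=
  ∀ D : Set L, D.Nonempty → DirectedOn (· ≤ ·) D → ∀ s, IsLUB D s → y ≤ s →
    (D ∩ up ({x} : Set L)).Nonempty

/-- The weakly way-below relation `x ≪_w y`. -/
def weaklyWayBelow (x y : L) : Prop :=
  ∀ D : Set L, D.Nonempty → DirectedOn (· ≤ ·) D → IsLUB D y →
    (D ∩ up ({x} : Set L)).Nonempty

/-- A continuous poset: each `⇓x` is directed with supremum `x`. -/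
def ContinuousPoset (L : Type*) [Preorder L] : Prop :=
  ∀ x : L, {y | wayBelow y x}.Nonempty ∧ DirectedOn (· ≤ ·) {y | wayBelow y x} ∧
    IsLUB {y | wayBelow y x} x

/-- An exact poset: each `⇓_w x` is directed with supremum `x`. -/
def ExactPoset (L : Type*) [Preorder L] : Prop :=
  ∀ x : L, {y | weaklyWayBelow y x}.Nonempty ∧ DirectedOn (· ≤ ·) {y | weaklyWayBelow y x} ∧
    IsLUB {y | weaklyWayBelow y x} x

/-- `F ≪ x` for a set `F`: every directed `D` with `sup D ≥ x` meets `↑F`. -/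
def finWayBelow (F : Set L) (x : L) : Prop :=
  ∀ D : Set L, D.Nonempty → DirectedOn (· ≤ ·) D → ∀ s, IsLUB D s → x ≤ s →
    (D ∩ up F).Nonempty

/-- A quasicontinuous poset: each `fin(x)` is a directed family (Smyth preorder)
with `↑x = ⋂_{F ∈ fin(x)} ↑F`. -/
def QuasicontinuousPoset (L : Type*) [Preorder L] : Prop :=
  ∀ x : L, {F : Set L | F.Finite ∧ finWayBelow F x}.Nonempty ∧
    DirectedOn (fun F G => up G ⊆ up F) {F : Set L | F.Finite ∧ finWayBelow F x} ∧
    up ({x} : Set L) = ⋂ F ∈ {F : Set L | F.Finite ∧ finWayBelow F x}, up F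

/-- A dcpo: every (nonempty) directed subset has a least upper bound. -/
def IsDcpo (L : Type*) [Preorder L] : Prop :=
  ∀ D : Set L, D.Nonempty → DirectedOn (· ≤ ·) D → ∃ x, IsLUB D x

end OrderDefs

/-- The poset `L = ℕ ∪ {ω, a}`: the usual order on `ℕ`, `x ≤ ω` for all `x`, and `a`
incomparable with all naturals. -/
inductive L₈ : Type where
  | nat : ℕ → L₈
  | omega : L₈
  | a : L₈

namespace L₈

protected def le : L₈ → L₈ → Prop
  | nat j, nat k => j ≤ k
  | _, omega => True
  | a, a => True
  | _, _ => False

instance : PartialOrder L₈ where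
  le := L₈.le
  le_refl x := by cases x <;> simp [L₈.le]
  le_trans x y z hxy hyz := by
    cases x <;> cases y <;> cases z <;> simp_all [L₈.le] <;> omega
  le_antisymm x y hxy hyx := by
    cases x <;> cases y <;> simp_all [L₈.le] <;> omega

end L₈

/-!
In `L₈` every element other than `ω` has only finitely many elements below it, so a nonempty
directed set whose supremum `s ≠ ω` contains `s`. A directed set `D` with supremum `ω ∉ D` cannot
contain `a` (the only element above `a` is `ω`), so its naturals are unbounded and `ℕ ⊆ ↓D`.
Hence `x ∈ A''` iff `x ∈ ↓A` or `ℕ ⊆ ↓A`; this description is closed under directed suprema, so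
`A''` is Scott closed and equals `cl(A)`. For `A = ℕ` this gives `cl(ℕ) = ℕ'' = L₈`, while
`ℕ' = ℕ ∪ {ω}` misses `a`.
-/

section Preorder

variable {α : Type*} [Preorder α]

lemma dw_eq_lowerClosure (A : Set α) : dw A = lowerClosure A := rfl

lemma isLowerSet_dw (A : Set α) : IsLowerSet (dw A) := (lowerClosure A).lower

lemma subset_oneStep (A : Set α) : A ⊆ oneStep A := fun x hx =>
  ⟨{x}, singleton_subset_iff.2 (subset_lowerClosure hx), singleton_nonempty x,
    directedOn_singleton x, isLUB_singleton⟩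

lemma oneStep_subset_weakOneStep (A : Set α) : oneStep A ⊆ weakOneStep A :=
  fun x ⟨D, hDA, hne, hdir, hx⟩ => ⟨D, hDA, hne, hdir, x, hx, le_rfl⟩

lemma isLowerSet_weakOneStep (A : Set α) : IsLowerSet (weakOneStep A) :=
  fun _ _ hle ⟨D, hDA, hne, hdir, y, hy, hxy⟩ => ⟨D, hDA, hne, hdir, y, hy, hle.trans hxy⟩

lemma dw_subset_weakOneStep (A : Set α) : dw A ⊆ weakOneStep A :=
  lowerClosure_min ((subset_oneStep A).trans (oneStep_subset_weakOneStep A))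
    (isLowerSet_weakOneStep A)

lemma isClosed_scott_iff {C : Set α} :
    @IsClosed α (Topology.scott α univ) C ↔ IsLowerSet C ∧ DirSupClosed C :=
  letI := Topology.scott α univ
  haveI : Topology.IsScott α univ := ⟨rfl⟩
  Topology.IsScott.isClosed_iff_isLowerSet_and_dirSupClosed

lemma weakOneStep_subset_scottCl (A : Set α) : weakOneStep A ⊆ scottCl A := by
  let := Topology.scott α univ
  obtain ⟨hlower, hdirSup⟩ := isClosed_scott_iff.1 (isClosed_closure (s := A))
  rintro x ⟨D, hDA, hne, hdir, y, hy, hxy⟩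
  exact hlower hxy (hdirSup (hDA.trans (lowerClosure_min subset_closure hlower)) hne hdir hy)

lemma scottCl_eq_weakOneStep {A : Set α} (h : DirSupClosed (weakOneStep A)) :
    scottCl A = weakOneStep A := by
  let := Topology.scott α univ
  refine (closure_minimal ?_ (isClosed_scott_iff.2 ⟨isLowerSet_weakOneStep A, h⟩)).antisymm
    (weakOneStep_subset_scottCl A)
  exact subset_lowerClosure.trans (dw_subset_weakOneStep A)

end Preorder

lemma IsLUB.mem_of_finite_of_directedOn {α : Type*} [PartialOrder α] {D : Set α} {s : α}
    (hs : IsLUB D s) (hfin : D.Finite) (hne : D.Nonempty) (hdir : DirectedOn (· ≤ ·) D) :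
    s ∈ D := by
  obtain ⟨m, hm⟩ := hfin.exists_maximal hne
  have hmax : IsGreatest D m := ⟨hm.prop, fun d hd => by
    obtain ⟨z, hz, hmz, hdz⟩ := hdir m hm.prop d hd
    exact hdz.trans (hm.le_of_ge hz hmz)⟩
  exact hs.unique hmax.isLUB ▸ hm.prop

namespace L₈

@[simp] lemma nat_le_nat {j k : ℕ} : nat j ≤ nat k ↔ j ≤ k := Iff.rfl

@[simp] lemma le_omega (x : L₈) : x ≤ omega := by cases x <;> exact trivial

@[simp] lemma not_omega_le_nat (n : ℕ) : ¬ omega ≤ nat n := id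

@[simp] lemma not_a_le_nat (n : ℕ) : ¬ a ≤ nat n := id

@[simp] lemma not_nat_le_a (n : ℕ) : ¬ nat n ≤ a := id

@[simp] lemma not_omega_le_a : ¬ omega ≤ a := id

lemma isLowerSet_range_nat : IsLowerSet (range nat) := by
  rintro _ x hx ⟨k, rfl⟩
  cases x <;> simp_all

lemma directedOn_range_nat : DirectedOn (· ≤ ·) (range nat) :=
  directedOn_range.2 (Monotone.directed_le fun _ _ => nat_le_nat.2)

lemma isLUB_range_nat : IsLUB (range nat) omega := by
  refine ⟨fun x _ => le_omega x, fun b hb => ?_⟩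
  cases b with
  | nat N => exact absurd (hb ⟨N + 1, rfl⟩) (by simp)
  | omega => exact le_rfl
  | a => exact absurd (hb ⟨0, rfl⟩) (not_nat_le_a 0)

lemma finite_Iic_of_ne_omega {x : L₈} (hx : x ≠ omega) : (Iic x).Finite := by
  cases x with
  | nat m =>
    refine ((finite_Iic m).image nat).subset fun y hy => ?_
    cases y <;> simp_all
  | omega => exact absurd rfl hx
  | a =>
    refine (finite_singleton a).subset fun y hy => ?_
    cases y <;> simp_all

lemma mem_of_isLUB_of_ne_omega {D : Set L₈} {s : L₈} (hne : D.Nonempty)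
    (hdir : DirectedOn (· ≤ ·) D) (hs : IsLUB D s) (h : s ≠ omega) : s ∈ D :=
  hs.mem_of_finite_of_directedOn ((finite_Iic_of_ne_omega h).subset fun _ hd => hs.1 hd) hne hdir

lemma range_nat_subset_dw_of_isLUB_omega {D : Set L₈} (hdir : DirectedOn (· ≤ ·) D)
    (hs : IsLUB D omega) (hω : omega ∉ D) : range nat ⊆ dw D := by
  -- only `ω` lies above `a`, so by directedness `a` would be an upper bound of `D`
  have ha : a ∉ D := fun ha => by
    refine not_omega_le_a (hs.2 fun d hd => ?_)
    obtain ⟨z, hz, haz, hdz⟩ := hdir a ha d hd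
    cases z <;> simp_all
  rintro _ ⟨n, rfl⟩
  by_contra hn
  refine not_omega_le_nat n (hs.2 fun d hd => ?_)
  cases d with
  | nat k => exact nat_le_nat.2 (not_le.1 fun hnk => hn ⟨nat k, hd, nat_le_nat.2 hnk⟩).le
  | omega => exact absurd hd hω
  | a => exact absurd hd ha

lemma mem_or_range_nat_subset_dw_of_isLUB {D : Set L₈} {s : L₈} (hne : D.Nonempty)
    (hdir : DirectedOn (· ≤ ·) D) (hs : IsLUB D s) : s ∈ D ∨ range nat ⊆ dw D := by
  by_cases hsD : s ∈ D
  · exact Or.inl hsD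
  obtain rfl : s = omega := by_contra fun h => hsD (mem_of_isLUB_of_ne_omega hne hdir hs h)
  exact Or.inr (range_nat_subset_dw_of_isLUB_omega hdir hs hsD)

lemma mem_weakOneStep_iff {A : Set L₈} {x : L₈} :
    x ∈ weakOneStep A ↔ x ∈ dw A ∨ range nat ⊆ dw A := by
  constructor
  · rintro ⟨D, hDA, hne, hdir, y, hy, hxy⟩
    rcases mem_or_range_nat_subset_dw_of_isLUB hne hdir hy with hyD | hnat
    · exact Or.inl (isLowerSet_dw A hxy (hDA hyD))
    · exact Or.inr (hnat.trans (lowerClosure_min hDA (isLowerSet_dw A)))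
  · rintro (hx | hnat)
    · exact dw_subset_weakOneStep A hx
    · exact ⟨range nat, hnat, range_nonempty nat, directedOn_range_nat, omega, isLUB_range_nat,
        le_omega x⟩

lemma dirSupClosed_weakOneStep (A : Set L₈) : DirSupClosed (weakOneStep A) := by
  intro D hD hne hdir s hs
  by_cases hA : range nat ⊆ dw A
  · exact mem_weakOneStep_iff.2 (Or.inr hA)
  have hDA : D ⊆ dw A := fun d hd => (mem_weakOneStep_iff.1 (hD hd)).resolve_right hA
  rcases mem_or_range_nat_subset_dw_of_isLUB hne hdir hs with hsD | hnat
  · exact hD hsD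
  · exact absurd (hnat.trans (lowerClosure_min hDA (isLowerSet_dw A))) hA

lemma oneStep_range_nat : oneStep (range nat) = range nat ∪ {omega} := by
  ext x
  constructor
  · rintro ⟨D, hDA, hne, hdir, hx⟩
    by_cases hxω : x = omega
    · exact Or.inr hxω
    rw [dw_eq_lowerClosure, isLowerSet_range_nat.lowerClosure] at hDA
    exact Or.inl (hDA (mem_of_isLUB_of_ne_omega hne hdir hx hxω))
  · rintro (hx | rfl)
    · exact subset_oneStep _ hx
    · exact ⟨range nat, subset_lowerClosure, range_nonempty nat, directedOn_range_nat,
        isLUB_range_nat⟩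

lemma weakOneStep_range_nat : weakOneStep (range nat) = univ :=
  eq_univ_of_forall fun _ => mem_weakOneStep_iff.2 (Or.inr subset_lowerClosure)

end L₈

/-- `L₈` has weak one-step closure but not one-step closure; moreover
`ℕ' = ℕ ∪ {ω}` while `ℕ'' = L`. -/
theorem L₈_weakOneStep_not_oneStep :
    HasWeakOneStepClosure L₈ ∧ ¬ HasOneStepClosure L₈ ∧
      oneStep (Set.range L₈.nat) = Set.range L₈.nat ∪ {L₈.omega} ∧
      weakOneStep (Set.range L₈.nat) = Set.univ := by
  have hweak : HasWeakOneStepClosure L₈ := fun A =>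
    scottCl_eq_weakOneStep (L₈.dirSupClosed_weakOneStep A)
  refine ⟨hweak, fun hone => ?_, L₈.oneStep_range_nat, L₈.weakOneStep_range_nat⟩
  have ha : L₈.a ∈ oneStep (range L₈.nat) := by
    rw [← hone, hweak, L₈.weakOneStep_range_nat]
    trivial
  simp [L₈.oneStep_range_nat] at ha
end

section
/- Let L be a poset such that D' is a lower set for every directed subset D of L. Then L is meet continuous. -/
open Set

/-
A directed `D` with supremum `s` has `s ∈ D'`, so the hypothesis puts every `x ≤ s` in `D'`: there is a
directed `E ⊆ ↓D` with supremum `x`. Then `E ⊆ ↓D ∩ ↓x`, and Scott-closed sets are closed under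
directed suprema.
-/

section OneStep

variable {L : Type*} [Preorder L]

lemma subset_dw (A : Set L) : A ⊆ dw A := fun a ha => ⟨a, ha, le_rfl⟩

lemma dw_subset_scottCl (A : Set L) : dw A ⊆ scottCl A := by
  let _ := Topology.scott L univ
  have : Topology.IsScott L univ := ⟨rfl⟩
  exact Topology.IsScott.lowerClosure_subset_closure

lemma oneStep_subset_scottCl (A : Set L) : oneStep A ⊆ scottCl A := by
  rintro x ⟨E, hEA, hEne, hEdir, hElub⟩
  let _ := Topology.scott L univ
  have : Topology.IsScott L univ := ⟨rfl⟩
  exact Topology.IsScott.dirSupClosed_of_isClosed isClosed_closure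
    (hEA.trans (dw_subset_scottCl A)) hEne hEdir hElub

lemma mem_oneStep_self {D : Set L} (hne : D.Nonempty) (hdir : DirectedOn (· ≤ ·) D) {s : L}
    (hs : IsLUB D s) : s ∈ oneStep D :=
  ⟨D, subset_dw D, hne, hdir, hs⟩

lemma mem_oneStep_dw_inter_dw_singleton {A : Set L} {x : L} (hx : x ∈ oneStep A) :
    x ∈ oneStep (dw A ∩ dw {x}) := by
  obtain ⟨E, hEA, hEne, hEdir, hElub⟩ := hx
  have hE : E ⊆ dw A ∩ dw {x} := fun e he => ⟨hEA he, x, rfl, hElub.1 he⟩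
  exact ⟨E, hE.trans (subset_dw _), hEne, hEdir, hElub⟩

end OneStep

/-- If `D'` is a lower set for every directed subset `D`, then `L` is meet continuous. -/
theorem meetContinuous_of_lowerSet_oneStep {L : Type*} [PartialOrder L]
    (h : ∀ D : Set L, D.Nonempty → DirectedOn (· ≤ ·) D → IsLowerSet (oneStep D)) :
    MeetContinuous L := by
  intro x D hne hdir s hs hxs
  have hx : x ∈ oneStep D := h D hne hdir hxs (mem_oneStep_self hne hdir hs)
  exact oneStep_subset_scottCl _ (mem_oneStep_dw_inter_dw_singleton hx)
end
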